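/- Every connected split graph G with nonempty clique part C (inducing a maximum clique) and nonempty independent part I contains an optimal power dominating set S with S ⊆ N(I) ⊆ C, i.e., a PDS of cardinality γ_p(G) and radius rad_p(G) contained in the set of clique vertices having a neighbour in I. -/
import Mathlib


open scoped Classical

/-- The closed neighbourhood `N[S]` of a finset of vertices. -/
noncomputable def closedNbhd {V : Type*} [Fintype V] (G : SimpleGraph V) (S : Finset V) :
    Finset V :=
  S ∪ S.biUnion fun v => G.neighborFinset v

/-- One propagation step of power domination. -/
noncomputable def pdStep {V : Type*} [Fintype V] (G : SimpleGraph V) (A : Finset V) : Finset V :=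
  A ∪ closedNbhd G (A.filter fun v => (G.neighborFinset v \ A).card ≤ 1)

/-- The monitored sets `P^i(S)`, with `P^0(S) = ∅` and `P^1(S) = N[S]`. -/
noncomputable def pdSeq {V : Type*} [Fintype V] (G : SimpleGraph V) (S : Finset V) : ℕ → Finset V
  | 0 => ∅
  | 1 => closedNbhd G S
  | (i + 2) => pdStep G (pdSeq G S (i + 1))

/-- `S` is a power dominating set of `G`. -/
def IsPDS {V : Type*} [Fintype V] (G : SimpleGraph V) (S : Finset V) : Prop :=
  ∃ i, pdSeq G S i = Finset.univ

/-- The power domination number `γ_p(G)`. -/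
noncomputable def pdNum {V : Type*} [Fintype V] (G : SimpleGraph V) : ℕ :=
  sInf {k | ∃ S : Finset V, IsPDS G S ∧ S.card = k}

/-- The propagation radius `rad_p(G, S)` of a PDS `S`. -/
noncomputable def pdRadS {V : Type*} [Fintype V] (G : SimpleGraph V) (S : Finset V) : ℕ :=
  sInf {i | pdSeq G S i = Finset.univ}

/-- The propagation radius `rad_p(G)`. -/
noncomputable def pdRad {V : Type*} [Fintype V] (G : SimpleGraph V) : ℕ :=
  sInf {r | ∃ S : Finset V, IsPDS G S ∧ S.card = pdNum G ∧ pdRadS G S = r}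

lemma closedNbhd_mono {V : Type*} [Fintype V] (G : SimpleGraph V) {S T : Finset V}
    (h : S ⊆ T) : closedNbhd G S ⊆ closedNbhd G T :=
  Finset.union_subset_union h (Finset.biUnion_subset_biUnion_of_subset_left _ h)

lemma pdStep_mono {V : Type*} [Fintype V] (G : SimpleGraph V) {A B : Finset V}
    (h : A ⊆ B) : pdStep G A ⊆ pdStep G B := by
  refine Finset.union_subset_union h (closedNbhd_mono G ?_)
  intro v hv
  simp only [Finset.mem_filter] at hv ⊢
  exact ⟨h hv.1, le_trans (Finset.card_le_card
    (Finset.sdiff_subset_sdiff Finset.Subset.rfl h)) hv.2⟩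

lemma pdSeq_mono {V : Type*} [Fintype V] (G : SimpleGraph V) {S T : Finset V}
    (h : closedNbhd G S ⊆ closedNbhd G T) : ∀ i, pdSeq G S i ⊆ pdSeq G T i
  | 0 => Finset.Subset.rfl
  | 1 => h
  | (i + 2) => pdStep_mono G (pdSeq_mono G h (i + 1))

lemma mem_closedNbhd {V : Type*} [Fintype V] (G : SimpleGraph V) {S : Finset V} {x : V} :
    x ∈ closedNbhd G S ↔ x ∈ S ∨ ∃ v ∈ S, G.Adj v x := by
  simp [closedNbhd, SimpleGraph.mem_neighborFinset]

lemma univ_isPDS {V : Type*} [Fintype V] (G : SimpleGraph V) :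
    ∃ i, pdSeq G (Finset.univ : Finset V) i = Finset.univ := by
  refine ⟨1, ?_⟩
  apply Finset.univ_subset_iff.mp
  intro x _
  exact (mem_closedNbhd G).mpr (Or.inl (Finset.mem_univ x))

theorem stmt_16 {V : Type*} [Fintype V] (G : SimpleGraph V) (C I : Finset V)
    (hpart : C ∪ I = Finset.univ) (hdisj : Disjoint C I)
    (hclique : G.IsClique ↑C)
    (hmaxclique : ∀ D : Finset V, G.IsClique ↑D → D.card ≤ C.card)
    (hindep : ∀ a ∈ I, ∀ b ∈ I, ¬ G.Adj a b)
    (hCne : C.Nonempty) (hIne : I.Nonempty) (hconn : G.Connected) :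
    ∃ S : Finset V, IsPDS G S ∧ S.card = pdNum G ∧ pdRadS G S = pdRad G ∧
      S ⊆ (Finset.univ.filter fun x => ∃ w ∈ I, G.Adj x w) ∧
      (Finset.univ.filter fun x => ∃ w ∈ I, G.Adj x w) ⊆ C := by
  classical
  set NI : Finset V := Finset.univ.filter fun x => ∃ w ∈ I, G.Adj x w with hNI
  have hCI : ∀ v : V, v ∈ C ∨ v ∈ I := by
    intro v
    have : v ∈ C ∪ I := hpart ▸ Finset.mem_univ v
    simpa [Finset.mem_union] using this
  have hNIC : NI ⊆ C := by
    intro x hx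
    rw [hNI, Finset.mem_filter] at hx
    obtain ⟨-, w, hwI, hadj⟩ := hx
    rcases hCI x with h | h
    · exact h
    · exact absurd hadj (hindep x h w hwI)
  have hnbr : ∀ w ∈ I, ∃ u, G.Adj w u ∧ u ∈ C ∧ u ∈ NI := by
    intro w hw
    obtain ⟨c, hc⟩ := hCne
    have hwc : w ≠ c := fun h => Finset.disjoint_left.mp hdisj (h ▸ hc) hw
    obtain ⟨p⟩ := hconn.preconnected w c
    have hex : ∃ u, G.Adj w u := by
      cases p with
      | nil => exact absurd rfl hwc
      | cons h q => exact ⟨_, h⟩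
    obtain ⟨u, h⟩ := hex
    have huI : u ∉ I := fun hu => hindep w hw u hu h
    have huC : u ∈ C := (hCI u).resolve_right huI
    refine ⟨u, h, huC, ?_⟩
    rw [hNI, Finset.mem_filter]
    exact ⟨Finset.mem_univ u, w, hw, h.symm⟩
  have hcl : ∀ u ∈ C, ∀ x ∈ C, x = u ∨ G.Adj u x := by
    intro u hu x hx
    by_cases hxu : x = u
    · exact Or.inl hxu
    · exact Or.inr (hclique hu hx (Ne.symm hxu))
  have hrepl : ∀ v : V, ∃ u ∈ NI, ∀ x, (x = v ∨ G.Adj v x) → (x = u ∨ G.Adj u x) := by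
    intro v
    by_cases hv : v ∈ NI
    · exact ⟨v, hv, fun x h => h⟩
    · rcases hCI v with hvC | hvI
      · obtain ⟨w₀, hw₀⟩ := hIne
        obtain ⟨u, -, huC, huNI⟩ := hnbr w₀ hw₀
        refine ⟨u, huNI, ?_⟩
        intro x hx
        have hxC : x ∈ C := by
          rcases hx with rfl | hadj
          · exact hvC
          · rcases hCI x with h | h
            · exact h
            · exact absurd
                (by rw [hNI, Finset.mem_filter]
                    exact ⟨Finset.mem_univ v, x, h, hadj⟩ : v ∈ NI) hv
        exact hcl u huC x hxC
      · obtain ⟨u, hadjvu, huC, huNI⟩ := hnbr v hvI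
        refine ⟨u, huNI, ?_⟩
        intro x hx
        rcases hx with rfl | hadj
        · exact Or.inr hadjvu.symm
        · have hxC : x ∈ C := by
            rcases hCI x with h | h
            · exact h
            · exact absurd hadj.symm (hindep x h v hvI)
          exact hcl u huC x hxC
  choose f hfNI hfdom using hrepl
  have hne1 : {k | ∃ S : Finset V, IsPDS G S ∧ S.card = k}.Nonempty :=
    ⟨(Finset.univ : Finset V).card, Finset.univ, univ_isPDS G, rfl⟩
  obtain ⟨S₁, hS₁pds, hS₁card⟩ := Nat.sInf_mem hne1
  have hne2 : {r | ∃ S : Finset V, IsPDS G S ∧ S.card = pdNum G ∧ pdRadS G S = r}.Nonempty :=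
    ⟨pdRadS G S₁, S₁, hS₁pds, hS₁card, rfl⟩
  obtain ⟨S₀, hS₀pds, hS₀card, hS₀rad⟩ := Nat.sInf_mem hne2
  set S' : Finset V := S₀.image f with hS'
  have hsub : closedNbhd G S₀ ⊆ closedNbhd G S' := by
    intro x hx
    rw [mem_closedNbhd] at hx ⊢
    rcases hx with hx | ⟨v, hv, hadj⟩
    · rcases hfdom x x (Or.inl rfl) with h | h
      · exact Or.inl (by rw [h]; exact Finset.mem_image_of_mem f hx)
      · exact Or.inr ⟨f x, Finset.mem_image_of_mem f hx, h⟩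
    · rcases hfdom v x (Or.inr hadj) with h | h
      · exact Or.inl (by rw [h]; exact Finset.mem_image_of_mem f hv)
      · exact Or.inr ⟨f v, Finset.mem_image_of_mem f hv, h⟩
  have hseq : ∀ i, pdSeq G S₀ i ⊆ pdSeq G S' i := pdSeq_mono G hsub
  have hS'pds : IsPDS G S' := by
    obtain ⟨i, hi⟩ := hS₀pds
    exact ⟨i, Finset.univ_subset_iff.mp (hi ▸ hseq i)⟩
  have hS'card : S'.card = pdNum G := by
    refine le_antisymm (hS₀card ▸ Finset.card_image_le) ?_
    exact Nat.sInf_le ⟨S', hS'pds, rfl⟩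
  have hradle : pdRadS G S' ≤ pdRadS G S₀ := by
    have hmemrad : pdSeq G S₀ (pdRadS G S₀) = Finset.univ :=
      Nat.sInf_mem (s := {i | pdSeq G S₀ i = Finset.univ}) hS₀pds
    exact Nat.sInf_le (Finset.univ_subset_iff.mp (hmemrad ▸ hseq _))
  have hS'rad : pdRadS G S' = pdRad G := by
    have hS₀rad' : pdRadS G S₀ = pdRad G := hS₀rad
    refine le_antisymm (hS₀rad' ▸ hradle) ?_
    exact Nat.sInf_le ⟨S', hS'pds, hS'card, rfl⟩
  refine ⟨S', hS'pds, hS'card, hS'rad, ?_, hNIC⟩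
  intro x hx
  obtain ⟨v, -, rfl⟩ := Finset.mem_image.mp hx
  exact hfNI v
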